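/- arXiv:2601.10828 — 3 statements merged into one kernel-verified Lean document; each statement's English description precedes it below -/
import Mathlib

section
/- Let f, g be smooth vector fields on D ⊆ ℝⁿ, let x(t) solve x' = f(x), x(0) = x₀, and let J(t) solve J' = Df(x(t)) J, J(0) = I. Then for every k ≥ 0, the k-th derivative at t = 0 of the function t ↦ J(t)⁻¹ g(x(t)) equals ad_f^k g(x₀), where ad_f g = [f, g] = Dg·f − Df·g and ad_f^k is the k-th iterate. Equivalently, the k-th Taylor coefficient of J(t)⁻¹ g(x(t)) at 0 is (1/k!) ad_f^k g(x₀). -/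
/-- Lie bracket `[f, g]` of two vector fields on `ℝⁿ`. -/
noncomputable def lieBracket {n : ℕ} (f g : (Fin n → ℝ) → (Fin n → ℝ)) :
    (Fin n → ℝ) → (Fin n → ℝ) :=
  fun x => fderiv ℝ g x (f x) - fderiv ℝ f x (g x)

lemma adSmooth {n : ℕ} (f g : (Fin n → ℝ) → (Fin n → ℝ))
    (hf : ContDiff ℝ (⊤ : ℕ∞) f) (hg : ContDiff ℝ (⊤ : ℕ∞) g) :
    ∀ k, ContDiff ℝ (⊤ : ℕ∞) ((lieBracket f)^[k] g) := by
  intro k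
  induction k with
  | zero => simpa using hg
  | succ k ih =>
    rw [Function.iterate_succ_apply']
    unfold lieBracket
    exact ((ih.fderiv_right (by simp)).clm_apply hf).sub
      ((hf.fderiv_right (by simp)).clm_apply ih)

theorem iteratedDeriv_Jinv_g_eq_adjoint
    {n : ℕ} (f g : (Fin n → ℝ) → (Fin n → ℝ))
    (hf : ContDiff ℝ (⊤ : ℕ∞) f) (hg : ContDiff ℝ (⊤ : ℕ∞) g)
    (x₀ : Fin n → ℝ) (x : ℝ → (Fin n → ℝ))
    (hx : ∀ t, HasDerivAt x (f (x t)) t) (hx0 : x 0 = x₀)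
    (J : ℝ → ((Fin n → ℝ) →L[ℝ] (Fin n → ℝ)))
    (hJ : ∀ t, HasDerivAt J ((fderiv ℝ f (x t)).comp (J t)) t)
    (hJ0 : J 0 = ContinuousLinearMap.id ℝ (Fin n → ℝ)) :
    ∀ k : ℕ,
      iteratedDeriv k (fun t => Ring.inverse (J t) (g (x t))) 0 =
        (lieBracket f)^[k] g x₀ := by
  set G : ℕ → ((Fin n → ℝ) → (Fin n → ℝ)) := fun k => (lieBracket f)^[k] g with hG
  set F : ℕ → ℝ → (Fin n → ℝ) := fun k t => Ring.inverse (J t) (G k (x t)) with hF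
  have hGsmooth : ∀ k, ContDiff ℝ (⊤ : ℕ∞) (G k) := adSmooth f g hf hg
  -- the set where J is invertible
  set U : Set ℝ := {t | IsUnit (J t)} with hUdef
  have hJcont : Continuous J := continuous_iff_continuousAt.2 fun s => (hJ s).continuousAt
  have hUopen : IsOpen U := Units.isOpen.preimage hJcont
  have h0U : (0 : ℝ) ∈ U := by
    show IsUnit (J 0)
    rw [hJ0]
    simpa [ContinuousLinearMap.one_def] using
      (isUnit_one : IsUnit (1 : (Fin n → ℝ) →L[ℝ] (Fin n → ℝ)))
  -- key derivative computation
  have hder : ∀ k, ∀ t ∈ U, HasDerivAt (F k) (F (k + 1) t) t := by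
    intro k t ht
    obtain ⟨u, hu⟩ := ht
    -- derivative of the inverse part
    have hinv : HasDerivAt (fun s => Ring.inverse (J s))
        ((-ContinuousLinearMap.mulLeftRight ℝ ((Fin n → ℝ) →L[ℝ] (Fin n → ℝ)) ↑u⁻¹ ↑u⁻¹)
          ((fderiv ℝ f (x t)).comp (J t))) t := by
      have := (hasFDerivAt_ringInverse (𝕜 := ℝ) u)
      rw [hu] at this
      exact this.comp_hasDerivAt t (hJ t)
    -- derivative of s ↦ G k (x s)
    have hGx : HasDerivAt (fun s => G k (x s)) (fderiv ℝ (G k) (x t) (f (x t))) t :=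
      (((hGsmooth k).differentiable (by simp) (x t)).hasFDerivAt).comp_hasDerivAt t (hx t)
    have := hinv.clm_apply hGx
    refine this.congr_deriv ?_; symm
    have hinvJ : Ring.inverse (J t) = (↑u⁻¹ : (Fin n → ℝ) →L[ℝ] (Fin n → ℝ)) := by
      rw [← hu]; exact Ring.inverse_unit u
    have hmul : (↑u⁻¹ : (Fin n → ℝ) →L[ℝ] (Fin n → ℝ)) * ((fderiv ℝ f (x t)).comp (J t)) * ↑u⁻¹
        = ↑u⁻¹ * fderiv ℝ f (x t) := by
      have : (fderiv ℝ f (x t)).comp (J t) = fderiv ℝ f (x t) * J t := rfl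
      rw [this, ← hu, mul_assoc, mul_assoc, Units.mul_inv, mul_one]
    simp only [ContinuousLinearMap.neg_apply, hF, hinvJ]
    rw [show (G (k + 1)) (x t) = fderiv ℝ (G k) (x t) (f (x t))
          - fderiv ℝ f (x t) (G k (x t)) by
        simp only [hG, Function.iterate_succ_apply']; rfl]
    rw [ContinuousLinearMap.mulLeftRight_apply]
    have : (↑u⁻¹ : (Fin n → ℝ) →L[ℝ] (Fin n → ℝ)) * ((fderiv ℝ f (x t)).comp (J t) * ↑u⁻¹)
        = ↑u⁻¹ * fderiv ℝ f (x t) := by rw [← mul_assoc]; exact hmul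
    calc (↑u⁻¹ : (Fin n → ℝ) →L[ℝ] (Fin n → ℝ)) (fderiv ℝ (G k) (x t) (f (x t)) - fderiv ℝ f (x t) (G k (x t)))
        = -((↑u⁻¹ * fderiv ℝ f (x t) : (Fin n → ℝ) →L[ℝ] (Fin n → ℝ)) (G k (x t)))
          + (↑u⁻¹ : (Fin n → ℝ) →L[ℝ] (Fin n → ℝ)) (fderiv ℝ (G k) (x t) (f (x t))) := by
          rw [map_sub]; rw [ContinuousLinearMap.mul_apply]; abel
      _ = -((↑u⁻¹ * ((fderiv ℝ f (x t)).comp (J t) * ↑u⁻¹) : (Fin n → ℝ) →L[ℝ] (Fin n → ℝ)) (G k (x t)))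
          + (↑u⁻¹ : (Fin n → ℝ) →L[ℝ] (Fin n → ℝ)) (fderiv ℝ (G k) (x t) (f (x t))) := by rw [this]
      _ = _ := by simp [ContinuousLinearMap.mul_apply]
  -- eventual equality of iterated derivatives
  have heq : ∀ k, iteratedDeriv k (F 0) =ᶠ[nhds (0 : ℝ)] F k := by
    intro k
    induction k with
    | zero => simp [iteratedDeriv_zero]
    | succ k ih =>
      have h1 : deriv (iteratedDeriv k (F 0)) =ᶠ[nhds (0 : ℝ)] deriv (F k) :=
        ih.deriv
      have h2 : deriv (F k) =ᶠ[nhds (0 : ℝ)] F (k + 1) := by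
        filter_upwards [hUopen.mem_nhds h0U] with t ht
        exact (hder k t ht).deriv
      rw [iteratedDeriv_succ]
      exact h1.trans h2
  intro k
  have := (heq k).self_of_nhds
  have hF0 : (fun t => Ring.inverse (J t) (g (x t))) = F 0 := by
    simp [hF, hG]
  rw [hF0, this]
  simp [hF, hJ0, hx0, ContinuousLinearMap.one_def.symm, Ring.inverse_one]
  rfl
end

section
/- Let f be a smooth vector field on D ⊆ ℝⁿ, ω : D → ℝ^{1×n} a smooth covector field, x(t) the solution of x' = f(x), x(0) = x₀, and J(t) the solution of J' = Df(x(t)) J, J(0) = I. Then for every k ≥ 0, the k-th derivative at t = 0 of t ↦ ω(x(t)) J(t) equals L_f^k ω(x₀), where L_f ω(x) = (Dω(x)ᵀ f(x))ᵀ + ω(x) Df(x). Equivalently, the k-th Taylor coefficient of ω(x(t)) J(t) at 0 is (1/k!) L_f^k ω(x₀). -/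
/-- Lie derivative of a covector field `ω` along a vector field `f`:
`L_f ω (x) = (Dω(x) f(x)) + ω(x) ∘ Df(x)`. -/
noncomputable def lieDerivCov {n : ℕ} (f : (Fin n → ℝ) → (Fin n → ℝ))
    (ω : (Fin n → ℝ) → ((Fin n → ℝ) →L[ℝ] ℝ)) :
    (Fin n → ℝ) → ((Fin n → ℝ) →L[ℝ] ℝ) :=
  fun x => fderiv ℝ ω x (f x) + (ω x).comp (fderiv ℝ f x)

lemma lieDerivCov_contDiff {n : ℕ} (f : (Fin n → ℝ) → (Fin n → ℝ)) (hf : ContDiff ℝ (⊤ : ℕ∞) f)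
    (ω : (Fin n → ℝ) → ((Fin n → ℝ) →L[ℝ] ℝ)) (hω : ContDiff ℝ (⊤ : ℕ∞) ω) :
    ContDiff ℝ (⊤ : ℕ∞) (lieDerivCov f ω) := by
  have h1 : ContDiff ℝ (⊤ : ℕ∞) (fderiv ℝ ω) := hω.fderiv_right (by simp)
  have h2 : ContDiff ℝ (⊤ : ℕ∞) (fderiv ℝ f) := hf.fderiv_right (by simp)
  exact (h1.clm_apply hf).add (hω.clm_comp h2)

theorem iteratedDeriv_omega_J_eq_lieDerivCov
    {n : ℕ} (f : (Fin n → ℝ) → (Fin n → ℝ)) (hf : ContDiff ℝ (⊤ : ℕ∞) f)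
    (ω : (Fin n → ℝ) → ((Fin n → ℝ) →L[ℝ] ℝ)) (hω : ContDiff ℝ (⊤ : ℕ∞) ω)
    (x₀ : Fin n → ℝ) (x : ℝ → (Fin n → ℝ))
    (hx : ∀ t, HasDerivAt x (f (x t)) t) (hx0 : x 0 = x₀)
    (J : ℝ → ((Fin n → ℝ) →L[ℝ] (Fin n → ℝ)))
    (hJ : ∀ t, HasDerivAt J ((fderiv ℝ f (x t)).comp (J t)) t)
    (hJ0 : J 0 = ContinuousLinearMap.id ℝ (Fin n → ℝ)) :
    ∀ k : ℕ,
      iteratedDeriv k (fun t => (ω (x t)).comp (J t)) 0 =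
        (lieDerivCov f)^[k] ω x₀ := by
  -- key derivative formula, for any smooth covector field
  have key : ∀ (ω : (Fin n → ℝ) → ((Fin n → ℝ) →L[ℝ] ℝ)), ContDiff ℝ (⊤ : ℕ∞) ω → ∀ t : ℝ,
      HasDerivAt (fun t => (ω (x t)).comp (J t)) ((lieDerivCov f ω (x t)).comp (J t)) t := by
    intro ω hω t
    have hωx : HasDerivAt (fun t => ω (x t)) (fderiv ℝ ω (x t) (f (x t))) t :=
      (hω.differentiable (by simp) (x t)).hasFDerivAt.comp_hasDerivAt t (hx t)
    have h := hωx.clm_comp (hJ t)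
    have heq : (lieDerivCov f ω (x t)).comp (J t) =
        ((fderiv ℝ ω (x t) (f (x t))).comp (J t) +
          (ω (x t)).comp ((fderiv ℝ f (x t)).comp (J t))) := by
      simp [lieDerivCov, ContinuousLinearMap.add_comp, ContinuousLinearMap.comp_assoc]
    rw [heq]; exact h
  -- general claim by induction on k, generalizing ω
  suffices h : ∀ k : ℕ, ∀ (ω : (Fin n → ℝ) → ((Fin n → ℝ) →L[ℝ] ℝ)), ContDiff ℝ (⊤ : ℕ∞) ω →
      iteratedDeriv k (fun t => (ω (x t)).comp (J t)) 0 = (lieDerivCov f)^[k] ω x₀ by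
    intro k; exact h k ω hω
  intro k
  induction k with
  | zero =>
    intro ω hω
    simp [iteratedDeriv_zero, hJ0, hx0]
  | succ k ih =>
    intro ω hω
    rw [iteratedDeriv_succ']
    have hderiv : (deriv fun t => (ω (x t)).comp (J t)) =
        fun t => ((lieDerivCov f ω) (x t)).comp (J t) := by
      funext t; exact (key ω hω t).deriv
    rw [hderiv, Function.iterate_succ_apply]
    exact ih (lieDerivCov f ω) (lieDerivCov_contDiff f hf ω hω)
end

section
/- Let f be a smooth vector field, ω a smooth covector field on D ⊆ ℝⁿ, x(t) the flow of f from x₀, and J(t) the variational matrix. Define V(t) = ω(x(t)) J(t) (a row vector). Then V'(t) = (L_f ω)(x(t)) J(t), where L_f ω(x) = (Dω(x)ᵀ f(x))ᵀ + ω(x) Df(x). -/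
theorem hasDerivAt_omega_J
    {n : ℕ} (f : (Fin n → ℝ) → (Fin n → ℝ)) (hf : ContDiff ℝ (⊤ : ℕ∞) f)
    (ω : (Fin n → ℝ) → ((Fin n → ℝ) →L[ℝ] ℝ)) (hω : ContDiff ℝ (⊤ : ℕ∞) ω)
    (x₀ : Fin n → ℝ) (x : ℝ → (Fin n → ℝ))
    (hx : ∀ t, HasDerivAt x (f (x t)) t) (hx0 : x 0 = x₀)
    (J : ℝ → ((Fin n → ℝ) →L[ℝ] (Fin n → ℝ)))
    (hJ : ∀ t, HasDerivAt J ((fderiv ℝ f (x t)).comp (J t)) t)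
    (hJ0 : J 0 = ContinuousLinearMap.id ℝ (Fin n → ℝ)) :
    ∀ t : ℝ,
      HasDerivAt (fun s => (ω (x s)).comp (J s))
        ((lieDerivCov f ω (x t)).comp (J t)) t := by
  intro t
  have hωx : HasDerivAt (fun s => ω (x s)) (fderiv ℝ ω (x t) (f (x t))) t :=
    ((hω.differentiable (by simp) (x t)).hasFDerivAt).comp_hasDerivAt t (hx t)
  have h := hωx.clm_comp (hJ t)
  have heq : (fderiv ℝ ω (x t) (f (x t))).comp (J t) +
      (ω (x t)).comp ((fderiv ℝ f (x t)).comp (J t)) =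
      (lieDerivCov f ω (x t)).comp (J t) := by
    simp [lieDerivCov, ContinuousLinearMap.add_comp, ContinuousLinearMap.comp_assoc]
  rwa [heq] at h
end
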